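/- Let n ≥ 1, ρ > 0, and λ ∈ (0, 1/ρ). Let f : ℝⁿ → ℝ be ρ-weakly convex and Lipschitz continuous, let r : ℝⁿ → ℝ ∪ {+∞} be proper, convex and lower semicontinuous, and set φ := f + r. Then: (i) for every u ∈ ℝⁿ the function x ↦ φ(x) + (1/(2λ))‖x − u‖² has a unique minimizer, denoted prox_{λφ}(u); and (ii) the Moreau envelope φ^λ(u) := inf_x { φ(x) + (1/(2λ))‖x − u‖² } is finite everywhere and differentiable at every u ∈ ℝⁿ, with gradient ∇φ^λ(u) = λ⁻¹(u − prox_{λφ}(u)). -/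

import Mathlib

open Set Filter Topology

/-- `f` is `ρ`-weakly convex. -/
def WeaklyConvex {E : Type*} [NormedAddCommGroup E] [NormedSpace ℝ E]
    (ρ : ℝ) (f : E → ℝ) : Prop :=
  ∀ x y : E, ∀ t : ℝ, t ∈ Set.Icc (0 : ℝ) 1 →
    f (t • x + (1 - t) • y) ≤ t * f x + (1 - t) * f y + ρ / 2 * (t * (1 - t)) * ‖x - y‖ ^ 2

/-- Convexity for functions with values in `ℝ ∪ {+∞}` (modelled inside `EReal`). -/
def ERealConvexOn {E : Type*} [NormedAddCommGroup E] [NormedSpace ℝ E]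
    (r : E → EReal) : Prop :=
  ∀ x y : E, ∀ t : ℝ, t ∈ Set.Icc (0 : ℝ) 1 →
    r (t • x + (1 - t) • y) ≤ (t : EReal) * r x + ((1 - t : ℝ) : EReal) * r y

/-- The Moreau envelope of `p` with parameter `lam`. -/
noncomputable def moreauEnv {E : Type*} [NormedAddCommGroup E] [NormedSpace ℝ E]
    (p : E → EReal) (lam : ℝ) (u : E) : EReal :=
  ⨅ x, p x + ((1 / (2 * lam) * ‖x - u‖ ^ 2 : ℝ) : EReal)

section AuxA

variable {E : Type*} [NormedAddCommGroup E]

lemma lsc_liminf_seq {φ : E → EReal} (hφ : LowerSemicontinuous φ) {x : ℕ → E} {p : E}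
    (hx : Tendsto x atTop (𝓝 p)) :
    φ p ≤ liminf (fun n => φ (x n)) atTop := by
  have h1 : φ p ≤ liminf φ (𝓝 p) := hφ.le_liminf p
  refine h1.trans ?_
  have : liminf φ (𝓝 p) ≤ liminf φ (map x atTop) := liminf_le_liminf_of_le hx
  simpa [Filter.liminf, Filter.map_map, Function.comp_def] using this

lemma lsc_min_on_compact {φ : E → EReal} (hφ : LowerSemicontinuous φ)
    {s : Set E} (hs : IsCompact s) (hne : s.Nonempty) :
    ∃ p ∈ s, ∀ x ∈ s, φ p ≤ φ x := by
  have hne' : (φ '' s).Nonempty := hne.image φ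
  obtain ⟨v, -, hv, hvmem⟩ := exists_seq_tendsto_sInf hne' (OrderBot.bddBelow _)
  choose x hxs hxv using fun n => hvmem n
  obtain ⟨p, hps, ψ, hψ, hxp⟩ := hs.tendsto_subseq hxs
  refine ⟨p, hps, fun y hy => ?_⟩
  have h1 : φ p ≤ liminf (fun n => φ (x (ψ n))) atTop := lsc_liminf_seq hφ hxp
  have h2 : Tendsto (fun n => φ (x (ψ n))) atTop (𝓝 (sInf (φ '' s))) := by
    have := hv.comp hψ.tendsto_atTop
    simpa [Function.comp_def, hxv] using this
  have h3 : liminf (fun n => φ (x (ψ n))) atTop = sInf (φ '' s) := h2.liminf_eq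
  exact (h1.trans_eq h3).trans (sInf_le ⟨y, hy, rfl⟩)

lemma epi_closed {r : E → EReal} (hr : LowerSemicontinuous r) :
    IsClosed {p : E × ℝ | r p.1 ≤ (p.2 : EReal)} := by
  refine IsSeqClosed.isClosed ?_
  intro z p hz hzp
  have h1 : Tendsto (fun n => (z n).1) atTop (𝓝 p.1) := (continuous_fst.tendsto p).comp hzp
  have h2 : Tendsto (fun n => (((z n).2 : ℝ) : EReal)) atTop (𝓝 (p.2 : EReal)) :=
    (continuous_coe_real_ereal.tendsto p.2).comp ((continuous_snd.tendsto p).comp hzp)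
  have key : r p.1 ≤ liminf (fun n => r (z n).1) atTop := lsc_liminf_seq hr h1
  refine key.trans ?_
  calc liminf (fun n => r (z n).1) atTop
      ≤ liminf (fun n => (((z n).2 : ℝ) : EReal)) atTop :=
        liminf_le_liminf (Eventually.of_forall fun n => hz n)
    _ = (p.2 : EReal) := h2.liminf_eq

end AuxA

section AuxB

variable {E : Type*} [NormedAddCommGroup E] [NormedSpace ℝ E]

lemma epi_convex {r : E → EReal} (hc : ERealConvexOn r) :
    Convex ℝ {p : E × ℝ | r p.1 ≤ (p.2 : EReal)} := by
  intro z hz w hw a b ha hb hab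
  simp only [Set.mem_setOf_eq] at hz hw ⊢
  have hb' : b = 1 - a := by linarith
  have h1 : r (a • z.1 + (1 - a) • w.1) ≤ (a : EReal) * r z.1 + ((1 - a : ℝ) : EReal) * r w.1 :=
    hc z.1 w.1 a ⟨ha, by linarith⟩
  have h2 : (a : EReal) * r z.1 ≤ (a : EReal) * ((z.2 : ℝ) : EReal) :=
    mul_le_mul_of_nonneg_left hz (by exact_mod_cast ha)
  have h3 : ((1 - a : ℝ) : EReal) * r w.1 ≤ ((1 - a : ℝ) : EReal) * ((w.2 : ℝ) : EReal) :=
    mul_le_mul_of_nonneg_left hw (by exact_mod_cast hb'.symm ▸ hb)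
  have : r (a • z.1 + (1 - a) • w.1) ≤ ((a * z.2 + (1 - a) * w.2 : ℝ) : EReal) := by
    refine h1.trans ?_
    rw [EReal.coe_add, EReal.coe_mul, EReal.coe_mul]
    exact add_le_add h2 h3
  simpa [hb', Prod.smul_def, smul_eq_mul] using this

lemma r_minorant {r : E → EReal} (hrbot : ∀ x, r x ≠ ⊥) (hrproper : ∃ x, r x ≠ ⊤)
    (hrconv : ERealConvexOn r) (hrlsc : LowerSemicontinuous r) :
    ∃ C : ℝ, 0 ≤ C ∧ ∀ x, ((-C - C * ‖x‖ : ℝ) : EReal) ≤ r x := by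
  have hconv := epi_convex hrconv
  have hclosed := epi_closed hrlsc
  obtain ⟨x₀, hx₀⟩ := hrproper
  set t₀ : ℝ := (r x₀).toReal with ht₀
  have hx₀' : r x₀ = (t₀ : EReal) := (EReal.coe_toReal hx₀ (hrbot x₀)).symm
  have hpt : (x₀, t₀ - 1) ∉ {p : E × ℝ | r p.1 ≤ (p.2 : EReal)} := by
    simp only [Set.mem_setOf_eq, hx₀', EReal.coe_le_coe_iff]
    intro h; linarith
  obtain ⟨ℓ, u, hℓpt, hsep⟩ := geometric_hahn_banach_point_closed hconv hclosed hpt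
  set a : ℝ := ℓ (0, 1) with ha_def
  have hdecomp : ∀ (x : E) (t : ℝ), ℓ (x, t) = ℓ (x, 0) + t * a := by
    intro x t
    have hxt : (x, t) = (x, (0:ℝ)) + t • ((0:E), (1:ℝ)) := by
      simp [Prod.ext_iff]
    rw [hxt, map_add, map_smul, smul_eq_mul]
  have hmem : ∀ (x : E), r x ≠ ⊤ → u < ℓ (x, 0) + a * (r x).toReal := by
    intro x hx
    have : (x, (r x).toReal) ∈ {p : E × ℝ | r p.1 ≤ (p.2 : EReal)} := by
      simp only [Set.mem_setOf_eq]
      rw [EReal.coe_toReal hx (hrbot x)]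
    have := hsep _ this
    rwa [hdecomp, mul_comm] at this
  have ha : 0 < a := by
    have h1 := hmem x₀ hx₀
    rw [← ht₀] at h1
    have h2 : ℓ (x₀, 0) + (t₀ - 1) * a < u := by rw [← hdecomp]; exact hℓpt
    nlinarith
  set C : ℝ := max (|u| / a) (‖ℓ‖ / a) with hC
  refine ⟨C, le_trans (div_nonneg (norm_nonneg ℓ) ha.le) (le_max_right _ _), fun x => ?_⟩
  by_cases hx : r x = ⊤
  · rw [hx]; exact le_top
  · rw [← EReal.coe_toReal hx (hrbot x), EReal.coe_le_coe_iff]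
    have h1 := hmem x hx
    have h2 : |ℓ (x, 0)| ≤ ‖ℓ‖ * ‖x‖ := by
      have := ℓ.le_opNorm (x, (0:ℝ))
      simpa [Prod.norm_def, Real.norm_eq_abs] using this
    have hCu : |u| / a ≤ C := le_max_left _ _
    have hCl : ‖ℓ‖ / a ≤ C := le_max_right _ _
    have hx0 : (0:ℝ) ≤ ‖x‖ := norm_nonneg x
    have key : (u - ℓ (x, 0)) / a < (r x).toReal := by
      rw [div_lt_iff₀ ha]; nlinarith
    have : -C - C * ‖x‖ ≤ (u - ℓ (x, 0)) / a := by
      rw [le_div_iff₀ ha]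
      have hau : -|u| ≤ u := neg_abs_le u
      have hax : -(‖ℓ‖ * ‖x‖) ≤ -ℓ (x, 0) := by
        have := abs_le.mp h2
        linarith
      have hC1 : |u| ≤ C * a := by
        rw [← div_le_iff₀ ha]; exact hCu
      have hC2 : ‖ℓ‖ ≤ C * a := by
        rw [← div_le_iff₀ ha]; exact hCl
      have hr : (-C - C * ‖x‖) * a = -(C * a) - (C * a) * ‖x‖ := by ring
      rw [hr]
      have h3 : (C * a) * ‖x‖ ≥ ‖ℓ‖ * ‖x‖ := mul_le_mul_of_nonneg_right hC2 hx0
      nlinarith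
    linarith

end AuxB

section Core

variable {E : Type*} [NormedAddCommGroup E] [InnerProductSpace ℝ E]

/-- The real-valued proximal objective on the effective domain. -/
noncomputable def Gfun (f : E → ℝ) (r : E → EReal) (lam : ℝ) (u x : E) : ℝ :=
  f x + (r x).toReal + 1 / (2 * lam) * ‖x - u‖ ^ 2

/-- The `EReal`-valued proximal objective. -/
noncomputable def Ffun (f : E → ℝ) (r : E → EReal) (lam : ℝ) (u x : E) : EReal :=
  ((f x : ℝ) : EReal) + r x + ((1 / (2 * lam) * ‖x - u‖ ^ 2 : ℝ) : EReal)

variable {f : E → ℝ} {r : E → EReal} {lam : ℝ}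

omit [InnerProductSpace ℝ E] in
lemma Fval (hrbot : ∀ x, r x ≠ ⊥) {x : E} (hx : r x ≠ ⊤) (u : E) :
    Ffun f r lam u x = ((Gfun f r lam u x : ℝ) : EReal) := by
  unfold Ffun Gfun
  rw [← EReal.coe_toReal hx (hrbot x)]
  norm_cast

omit [InnerProductSpace ℝ E] in
lemma Ftop {x : E} (hx : r x = ⊤) (u : E) : Ffun f r lam u x = ⊤ := by
  unfold Ffun
  rw [hx]
  rw [EReal.coe_add_top, EReal.top_add_coe]

omit [InnerProductSpace ℝ E] in
lemma Falt (u x : E) :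
    Ffun f r lam u x = r x + ((f x + 1 / (2 * lam) * ‖x - u‖ ^ 2 : ℝ) : EReal) := by
  unfold Ffun
  rw [EReal.coe_add, add_comm ((f x : ℝ) : EReal) (r x), add_assoc]

omit [InnerProductSpace ℝ E] in
lemma Flsc (hf : Continuous f) (hrlsc : LowerSemicontinuous r) (u : E) :
    LowerSemicontinuous (Ffun f r lam u) := by
  have : (Ffun f r lam u) = fun x => r x + ((f x + 1 / (2 * lam) * ‖x - u‖ ^ 2 : ℝ) : EReal) :=
    funext fun x => Falt u x
  rw [this]
  have hcont : Continuous (fun x : E => ((f x + 1 / (2 * lam) * ‖x - u‖ ^ 2 : ℝ) : EReal)) := by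
    refine continuous_coe_real_ereal.comp ?_
    fun_prop
  refine LowerSemicontinuous.add' hrlsc hcont.lowerSemicontinuous (fun x => ?_)
  exact EReal.continuousAt_add (Or.inr (EReal.coe_ne_bot _)) (Or.inr (EReal.coe_ne_top _))

end Core

section Core2

variable {E : Type*} [NormedAddCommGroup E] [InnerProductSpace ℝ E]
variable {f : E → ℝ} {r : E → EReal} {lam : ℝ}

omit [InnerProductSpace ℝ E] in
lemma fcont {L : ℝ} (hlip : ∀ x y : E, |f x - f y| ≤ L * ‖x - y‖) : Continuous f := by
  have : LipschitzWith (Real.toNNReal L) f := by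
    apply LipschitzWith.of_dist_le_mul
    intro x y
    rw [Real.dist_eq, dist_eq_norm]
    calc |f x - f y| ≤ L * ‖x - y‖ := hlip x y
      _ ≤ (Real.toNNReal L) * ‖x - y‖ :=
        mul_le_mul_of_nonneg_right (Real.le_coe_toNNReal L) (norm_nonneg _)
  exact this.continuous

omit [InnerProductSpace ℝ E] in
lemma Flower (hrbot : ∀ x, r x ≠ ⊥) {L C : ℝ} (hL : 0 ≤ L) (hC : 0 ≤ C)
    (hlip : ∀ x y : E, |f x - f y| ≤ L * ‖x - y‖)
    (hCr : ∀ x, ((-C - C * ‖x‖ : ℝ) : EReal) ≤ r x) (u x : E) :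
    ((f 0 - C - (L + C) * (‖x - u‖ + ‖u‖) + 1 / (2 * lam) * ‖x - u‖ ^ 2 : ℝ) : EReal) ≤
      Ffun f r lam u x := by
  by_cases hx : r x = ⊤
  · rw [Ftop hx]; exact le_top
  · rw [Fval hrbot hx u, EReal.coe_le_coe_iff]
    unfold Gfun
    have h1 : f 0 - L * ‖x‖ ≤ f x := by
      have h := abs_le.mp (hlip x 0)
      simp only [sub_zero] at h
      linarith [h.1]
    have h2 : -C - C * ‖x‖ ≤ (r x).toReal := by
      have h := hCr x
      rw [← EReal.coe_toReal hx (hrbot x), EReal.coe_le_coe_iff] at h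
      exact h
    have h3 : ‖x‖ ≤ ‖x - u‖ + ‖u‖ := by
      calc ‖x‖ = ‖x - u + u‖ := by rw [sub_add_cancel]
        _ ≤ ‖x - u‖ + ‖u‖ := norm_add_le _ _
    have h4 := mul_le_mul_of_nonneg_left h3 hL
    have h5 := mul_le_mul_of_nonneg_left h3 hC
    nlinarith

lemma Fmin_exists [FiniteDimensional ℝ E]
    (hlam₁ : 0 < lam) {L C : ℝ} (hL : 0 ≤ L) (hC : 0 ≤ C)
    (hlip : ∀ x y : E, |f x - f y| ≤ L * ‖x - y‖)
    (hCr : ∀ x, ((-C - C * ‖x‖ : ℝ) : EReal) ≤ r x)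
    (hrbot : ∀ x, r x ≠ ⊥) (hrlsc : LowerSemicontinuous r)
    {x₀ : E} (hx₀ : r x₀ ≠ ⊤) (u : E) :
    ∃ p, ∀ y, Ffun f r lam u p ≤ Ffun f r lam u y := by
  have hfc : Continuous f := fcont hlip
  have hK : 0 < 1 / (2 * lam) := by positivity
  set K : ℝ := 1 / (2 * lam) with hKdef
  set c₀ : ℝ := Gfun f r lam u x₀ with hc₀
  set S : Set E := {x | Ffun f r lam u x ≤ (c₀ : EReal)} with hS
  have hx₀S : x₀ ∈ S := by
    simp only [hS, Set.mem_setOf_eq, Fval hrbot hx₀ u, le_refl]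
    exact le_refl _
  have hSclosed : IsClosed S := by
    have hopen : IsOpen (Ffun f r lam u ⁻¹' Set.Ioi (c₀ : EReal)) :=
      lowerSemicontinuous_iff_isOpen_preimage.mp (Flsc hfc hrlsc u) (c₀ : EReal)
    have heq : S = (Ffun f r lam u ⁻¹' Set.Ioi (c₀ : EReal))ᶜ := by
      ext x; simp [hS, not_lt]
    rw [heq]
    exact hopen.isClosed_compl
  set M : ℝ := L + C with hM
  set D : ℝ := f 0 - C - M * ‖u‖ with hD
  set R : ℝ := max ((M + 1) / K) (|c₀ - D| + 1) with hR
  have hSsub : S ⊆ Metric.closedBall u R := by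
    intro x hx
    rw [Metric.mem_closedBall, dist_eq_norm]
    by_contra hcon
    push_neg at hcon
    set s : ℝ := ‖x - u‖ with hsdef
    have hs0 : 0 ≤ s := norm_nonneg _
    have hs1 : (M + 1) / K < s := lt_of_le_of_lt (le_max_left _ _) hcon
    have hs2 : |c₀ - D| + 1 < s := lt_of_le_of_lt (le_max_right _ _) hcon
    have hKs : M + 1 < K * s := by rwa [div_lt_iff₀ hK, mul_comm] at hs1
    have hsub : D - M * s + K * s ^ 2 ≤ c₀ := by
      have h := (Flower hrbot hL hC hlip hCr u x).trans hx
      rw [EReal.coe_le_coe_iff] at h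
      have hexp : f 0 - C - (L + C) * (s + ‖u‖) + K * s ^ 2 = D - M * s + K * s ^ 2 := by
        rw [hD, hM]; ring
      linarith [hexp ▸ h]
    have habs : c₀ - D ≤ |c₀ - D| := le_abs_self _
    nlinarith
  have hScompact : IsCompact S :=
    (isCompact_closedBall u R).of_isClosed_subset hSclosed hSsub
  obtain ⟨p, hpS, hpmin⟩ := lsc_min_on_compact (Flsc hfc hrlsc u) hScompact ⟨x₀, hx₀S⟩
  refine ⟨p, fun y => ?_⟩
  by_cases hy : y ∈ S
  · exact hpmin y hy
  · have h1 : Ffun f r lam u p ≤ (c₀ : EReal) := hpS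
    have h2 : (c₀ : EReal) < Ffun f r lam u y := not_le.mp hy
    exact h1.trans h2.le

end Core2

section Core3

variable {E : Type*} [NormedAddCommGroup E] [InnerProductSpace ℝ E]
variable {f : E → ℝ} {r : E → EReal} {ρ lam : ℝ}

lemma midpoint_norm_sq (u x y : E) :
    ‖((1/2:ℝ) • x + (1/2:ℝ) • y) - u‖^2 =
      1/2 * ‖x - u‖^2 + 1/2 * ‖y - u‖^2 - 1/4 * ‖x - y‖^2 := by
  have h1 : ((1/2:ℝ) • x + (1/2:ℝ) • y) - u = (1/2:ℝ) • ((x - u) + (y - u)) := by module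
  have h2 : x - y = (x - u) - (y - u) := by abel
  rw [h1, h2]
  set a := x - u
  set b := y - u
  have hp := parallelogram_law_with_norm ℝ a b
  have hp' : ‖a + b‖^2 + ‖a - b‖^2 = 2 * (‖a‖^2 + ‖b‖^2) := by
    exact hp
  have hs : ‖(1/2:ℝ) • (a + b)‖^2 = 1/4 * ‖a + b‖^2 := by
    rw [norm_smul, Real.norm_eq_abs, abs_of_pos (by norm_num : (0:ℝ) < 1/2)]
    ring
  rw [hs]; linarith

lemma Gmid (hweak : WeaklyConvex ρ f) (hrbot : ∀ x, r x ≠ ⊥) (hrconv : ERealConvexOn r)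
    (u : E) {x y : E} (hx : r x ≠ ⊤) (hy : r y ≠ ⊤) :
    r ((1/2:ℝ) • x + (1/2:ℝ) • y) ≠ ⊤ ∧
    Gfun f r lam u ((1/2:ℝ) • x + (1/2:ℝ) • y) ≤
      1/2 * Gfun f r lam u x + 1/2 * Gfun f r lam u y
        - (1/(2*lam) - ρ/2)/4 * ‖x - y‖^2 := by
  have h12 : (1 - (1/2:ℝ)) = 1/2 := by norm_num
  have hrmid := hrconv x y (1/2) ⟨by norm_num, by norm_num⟩
  rw [h12] at hrmid
  rw [← EReal.coe_toReal hx (hrbot x), ← EReal.coe_toReal hy (hrbot y),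
    ← EReal.coe_mul, ← EReal.coe_mul, ← EReal.coe_add] at hrmid
  have hmidtop : r ((1/2:ℝ) • x + (1/2:ℝ) • y) ≠ ⊤ :=
    ne_top_of_le_ne_top (EReal.coe_ne_top _) hrmid
  have hmidR : (r ((1/2:ℝ) • x + (1/2:ℝ) • y)).toReal ≤
      1/2 * (r x).toReal + 1/2 * (r y).toReal := by
    have := EReal.toReal_le_toReal hrmid (hrbot _) (EReal.coe_ne_top _)
    rwa [EReal.toReal_coe] at this
  have hf := hweak x y (1/2) ⟨by norm_num, by norm_num⟩
  rw [h12] at hf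
  have hnorm := midpoint_norm_sq u x y
  refine ⟨hmidtop, ?_⟩
  unfold Gfun
  rw [hnorm]
  nlinarith [hf, hmidR]

omit [InnerProductSpace ℝ E] in
lemma min_rtop (hrbot : ∀ x, r x ≠ ⊥) {x₀ : E} (hx₀ : r x₀ ≠ ⊤) {u p : E}
    (hmin : ∀ y, Ffun f r lam u p ≤ Ffun f r lam u y) : r p ≠ ⊤ := by
  intro h
  have h2 := hmin x₀
  rw [Ftop h u, top_le_iff, Fval hrbot hx₀ u] at h2
  exact EReal.coe_ne_top _ h2

lemma Fgrowth (hweak : WeaklyConvex ρ f) (hrbot : ∀ x, r x ≠ ⊥) (hrconv : ERealConvexOn r)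
    {u p : E} (hp : r p ≠ ⊤)
    (hmin : ∀ y, Ffun f r lam u p ≤ Ffun f r lam u y) {x : E} (hx : r x ≠ ⊤) :
    Gfun f r lam u p + (1/(2*lam) - ρ/2)/2 * ‖x - p‖^2 ≤ Gfun f r lam u x := by
  obtain ⟨hmidtop, hmid⟩ := Gmid (lam := lam) hweak hrbot hrconv u hp hx
  have hGple : Gfun f r lam u p ≤ Gfun f r lam u ((1/2:ℝ) • p + (1/2:ℝ) • x) := by
    have := hmin ((1/2:ℝ) • p + (1/2:ℝ) • x)
    rwa [Fval hrbot hp u, Fval hrbot hmidtop u, EReal.coe_le_coe_iff] at this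
  have hrev : ‖p - x‖^2 = ‖x - p‖^2 := by rw [norm_sub_rev p x]
  rw [hrev] at hmid
  linarith [hmid, hGple]

lemma env_eq (hrbot : ∀ x, r x ≠ ⊥) {u p : E} (hp : r p ≠ ⊤)
    (hmin : ∀ y, Ffun f r lam u p ≤ Ffun f r lam u y) :
    moreauEnv (fun x => ((f x : ℝ) : EReal) + r x) lam u = ((Gfun f r lam u p : ℝ) : EReal) := by
  refine le_antisymm ?_ ?_
  · exact (iInf_le _ p).trans_eq (Fval hrbot hp u)
  · exact le_iInf fun x => (Fval hrbot hp u) ▸ hmin x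

end Core3

section Main

open RealInnerProductSpace

theorem moreau_main {E : Type*} [NormedAddCommGroup E] [InnerProductSpace ℝ E]
    [FiniteDimensional ℝ E]
    (ρ lam : ℝ) (hρ : 0 < ρ) (hlam₁ : 0 < lam) (hlam₂ : lam < 1 / ρ)
    (f : E → ℝ) (hweak : WeaklyConvex ρ f)
    (L : ℝ) (hL : 0 ≤ L) (hlip : ∀ x y : E, |f x - f y| ≤ L * ‖x - y‖)
    (r : E → EReal) (hrbot : ∀ x, r x ≠ ⊥) (hrproper : ∃ x, r x ≠ ⊤)
    (hrconv : ERealConvexOn r) (hrlsc : LowerSemicontinuous r) :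
    (∀ u : E, ∃! p : E, ∀ y : E, Ffun f r lam u p ≤ Ffun f r lam u y) ∧
    (∀ u : E,
      moreauEnv (fun x => ((f x : ℝ) : EReal) + r x) lam u ≠ ⊥ ∧
      moreauEnv (fun x => ((f x : ℝ) : EReal) + r x) lam u ≠ ⊤) ∧
    (∀ u p : E, (∀ y : E, Ffun f r lam u p ≤ Ffun f r lam u y) →
      HasGradientAt (fun v => (moreauEnv (fun x => ((f x : ℝ) : EReal) + r x) lam v).toReal)
        (lam⁻¹ • (u - p)) u) := by
  obtain ⟨C, hC, hCr⟩ := r_minorant hrbot hrproper hrconv hrlsc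
  obtain ⟨x₀, hx₀⟩ := hrproper
  have hexists : ∀ u : E, ∃ p, ∀ y, Ffun f r lam u p ≤ Ffun f r lam u y :=
    fun u => Fmin_exists hlam₁ hL hC hlip hCr hrbot hrlsc hx₀ u
  have hρlam : lam * ρ < 1 := by rwa [lt_div_iff₀ hρ] at hlam₂
  have hμeq : 1/(2*lam) - ρ/2 = (1 - lam*ρ)/(2*lam) := by field_simp
  have hμ : 0 < 1/(2*lam) - ρ/2 := by
    rw [hμeq]; exact div_pos (by linarith) (by linarith)
  have hν : 0 < (1/(2*lam) - ρ/2)/2 := by linarith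
  have hK : 0 < 1/(2*lam) := by positivity
  -- uniqueness helper
  have huniq : ∀ u p q : E, (∀ y, Ffun f r lam u p ≤ Ffun f r lam u y) →
      (∀ y, Ffun f r lam u q ≤ Ffun f r lam u y) → q = p := by
    intro u p q hp hq
    have hptop : r p ≠ ⊤ := min_rtop hrbot hx₀ hp
    have hqtop : r q ≠ ⊤ := min_rtop hrbot hx₀ hq
    have hgrow := Fgrowth hweak hrbot hrconv hptop hp hqtop
    have hle : Gfun f r lam u q ≤ Gfun f r lam u p := by
      have := hq p
      rwa [Fval hrbot hqtop u, Fval hrbot hptop u, EReal.coe_le_coe_iff] at this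
    have hn2 : ‖q - p‖^2 ≤ 0 := by nlinarith
    have hn0 : ‖q - p‖^2 = 0 := le_antisymm hn2 (by positivity)
    have hqp : ‖q - p‖ = 0 := pow_eq_zero_iff (n := 2) (by norm_num) |>.mp hn0
    rw [norm_eq_zero, sub_eq_zero] at hqp
    exact hqp
  refine ⟨fun u => ?_, fun u => ?_, fun u p hp => ?_⟩
  · obtain ⟨p, hp⟩ := hexists u
    exact ⟨p, hp, fun q hq => huniq u p q hp hq⟩
  · obtain ⟨p, hp⟩ := hexists u
    have hptop : r p ≠ ⊤ := min_rtop hrbot hx₀ hp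
    rw [env_eq hrbot hptop hp]
    exact ⟨EReal.coe_ne_bot _, EReal.coe_ne_top _⟩
  -- the gradient statement
  · have hptop : r p ≠ ⊤ := min_rtop hrbot hx₀ hp
    have hPv : ∀ v : E, ∃ q, (r q ≠ ⊤) ∧ (∀ y, Ffun f r lam v q ≤ Ffun f r lam v y) := by
      intro v
      obtain ⟨q, hq⟩ := hexists v
      exact ⟨q, min_rtop hrbot hx₀ hq, hq⟩
    choose P hPtop hPmin using hPv
    have henv : ∀ v : E, (moreauEnv (fun x => ((f x : ℝ) : EReal) + r x) lam v).toReal =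
        Gfun f r lam v (P v) := by
      intro v
      rw [env_eq hrbot (hPtop v) (hPmin v)]
      exact EReal.toReal_coe _
    have hval : Gfun f r lam u (P u) = Gfun f r lam u p := by
      have h1 : Gfun f r lam u (P u) ≤ Gfun f r lam u p := by
        have := hPmin u p
        rwa [Fval hrbot (hPtop u) u, Fval hrbot hptop u, EReal.coe_le_coe_iff] at this
      have h2 : Gfun f r lam u p ≤ Gfun f r lam u (P u) := by
        have := hp (P u)
        rwa [Fval hrbot (hPtop u) u, Fval hrbot hptop u, EReal.coe_le_coe_iff] at this
      exact le_antisymm h1 h2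
    set g : E := lam⁻¹ • (u - p) with hgdef
    set Cb : ℝ := 1/(2*lam) + 4*(1/(2*lam))^2/((1/(2*lam) - ρ/2)/2) with hCbdef
    have hdiv4 : 0 < 4*(1/(2*lam))^2/((1/(2*lam) - ρ/2)/2) := div_pos (by positivity) hν
    have hCb : 0 < Cb := by rw [hCbdef]; linarith
    have hlaminv : lam⁻¹ = 2*(1/(2*lam)) := by field_simp
    have hquad : ∀ v : E,
        |Gfun f r lam v (P v) - Gfun f r lam u p - ⟪g, v - u⟫| ≤ Cb * ‖v - u‖^2 := by
      intro v
      set w : E := P v with hwdef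
      have hwtop : r w ≠ ⊤ := hPtop v
      have hs0 : 0 ≤ ‖v - u‖ := norm_nonneg _
      have ht0 : 0 ≤ ‖w - p‖ := norm_nonneg _
      have hinner_g : ⟪g, v - u⟫ = -(2*(1/(2*lam))) * ⟪p - u, v - u⟫ := by
        rw [hgdef, real_inner_smul_left]
        have h1 : u - p = -(p - u) := by abel
        rw [h1, inner_neg_left, hlaminv]
        ring
      have hBA : ⟪w - u, v - u⟫ - ⟪p - u, v - u⟫ = ⟪w - p, v - u⟫ := by
        rw [← inner_sub_left]
        have h1 : (w - u) - (p - u) = w - p := by abel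
        rw [h1]
      -- value transfers between centers
      have hpv : ‖p - v‖^2 = ‖p - u‖^2 - 2*⟪p - u, v - u⟫ + ‖v - u‖^2 := by
        rw [show p - v = (p - u) - (v - u) from by abel, norm_sub_sq_real]
      have hwv : ‖w - v‖^2 = ‖w - u‖^2 - 2*⟪w - u, v - u⟫ + ‖v - u‖^2 := by
        rw [show w - v = (w - u) - (v - u) from by abel, norm_sub_sq_real]
      have hGvp : Gfun f r lam v p = Gfun f r lam u p
          + 1/(2*lam) * (‖v - u‖^2 - 2*⟪p - u, v - u⟫) := by
        unfold Gfun
        rw [hpv]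
        ring
      have hGuw : Gfun f r lam u w = Gfun f r lam v w
          + 1/(2*lam) * (2*⟪w - u, v - u⟫ - ‖v - u‖^2) := by
        unfold Gfun
        rw [hwv]
        ring
      -- minimality comparisons (real form)
      have hmin_v : Gfun f r lam v w ≤ Gfun f r lam v p := by
        have := hPmin v p
        rwa [Fval hrbot hwtop v, Fval hrbot hptop v, EReal.coe_le_coe_iff] at this
      have hmin_u : Gfun f r lam u p ≤ Gfun f r lam u w := by
        have := hp w
        rwa [Fval hrbot hwtop u, Fval hrbot hptop u, EReal.coe_le_coe_iff] at this
      -- strong-convexity growth at u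
      have hgrow : Gfun f r lam u p + (1/(2*lam) - ρ/2)/2 * ‖w - p‖^2 ≤ Gfun f r lam u w :=
        Fgrowth hweak hrbot hrconv hptop hp hwtop
      have hcauchy : ⟪w - p, v - u⟫ ≤ ‖w - p‖ * ‖v - u‖ := real_inner_le_norm _ _
      -- prox contraction
      have hkey : (1/(2*lam) - ρ/2)/2 * ‖w - p‖^2 ≤
          2*(1/(2*lam)) * (⟪w - u, v - u⟫ - ⟪p - u, v - u⟫) := by
        linarith only [hgrow, hGuw, hmin_v, hGvp]
      rw [hBA] at hkey
      have hwp : ‖w - p‖ ≤ (2*(1/(2*lam))/((1/(2*lam) - ρ/2)/2)) * ‖v - u‖ := by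
        have hc2 : 2*(1/(2*lam)) * ⟪w - p, v - u⟫ ≤ 2*(1/(2*lam)) * (‖w - p‖ * ‖v - u‖) :=
          mul_le_mul_of_nonneg_left hcauchy (by positivity)
        by_contra hcon
        push_neg at hcon
        have h2Kns : 2*(1/(2*lam))*‖v - u‖ < (1/(2*lam) - ρ/2)/2 * ‖w - p‖ := by
          have h1 := mul_lt_mul_of_pos_left hcon hν
          have h2 : (1/(2*lam) - ρ/2)/2 * ((2*(1/(2*lam))/((1/(2*lam) - ρ/2)/2)) * ‖v - u‖)
              = 2*(1/(2*lam))*‖v - u‖ := by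
            rw [← mul_assoc,
              mul_comm ((1/(2*lam) - ρ/2)/2) (2*(1/(2*lam))/((1/(2*lam) - ρ/2)/2)),
              div_mul_cancel₀ _ (ne_of_gt hν)]
          linarith only [h1, h2]
        have htpos : 0 < ‖w - p‖ := by
          have h0 : 0 ≤ 2*(1/(2*lam))*‖v - u‖ := by positivity
          have h1 : 0 < (1/(2*lam) - ρ/2)/2 * ‖w - p‖ := lt_of_le_of_lt h0 h2Kns
          rcases mul_pos_iff.mp h1 with ⟨-, h⟩ | ⟨h, -⟩
          · exact h
          · linarith
        have hmm := mul_lt_mul_of_pos_right h2Kns htpos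
        linarith only [hkey, hc2, hmm]
      -- upper bound
      have hub : Gfun f r lam v w - Gfun f r lam u p - ⟪g, v - u⟫ ≤ 1/(2*lam) * ‖v - u‖^2 := by
        linarith only [hmin_v, hGvp, hinner_g]
      -- lower bound
      have hW2 : ‖w - p‖ * ‖v - u‖ ≤
          (2*(1/(2*lam))/((1/(2*lam) - ρ/2)/2)) * ‖v - u‖ * ‖v - u‖ := by
        have := mul_le_mul_of_nonneg_right hwp hs0
        linarith only [this]
      have hW3 : 2*(1/(2*lam)) * (‖w - p‖ * ‖v - u‖) ≤
          2*(1/(2*lam)) * ((2*(1/(2*lam))/((1/(2*lam) - ρ/2)/2)) * ‖v - u‖ * ‖v - u‖) :=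
        mul_le_mul_of_nonneg_left hW2 (by positivity)
      have hCbid : 2*(1/(2*lam)) * ((2*(1/(2*lam))/((1/(2*lam) - ρ/2)/2)) * ‖v - u‖ * ‖v - u‖)
          = (4*(1/(2*lam))^2/((1/(2*lam) - ρ/2)/2)) * ‖v - u‖^2 := by
        rw [pow_two]; ring
      have hc2 : 2*(1/(2*lam)) * ⟪w - p, v - u⟫ ≤ 2*(1/(2*lam)) * (‖w - p‖ * ‖v - u‖) :=
        mul_le_mul_of_nonneg_left hcauchy (by positivity)
      have hlb : -(Cb * ‖v - u‖^2) ≤ Gfun f r lam v w - Gfun f r lam u p - ⟪g, v - u⟫ := by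
        rw [hCbdef]
        have hsq : 0 ≤ ‖v - u‖^2 := by positivity
        have hBA2 : 2*(1/(2*lam)) * (⟪w - u, v - u⟫ - ⟪p - u, v - u⟫)
            = 2*(1/(2*lam)) * ⟪w - p, v - u⟫ := by rw [hBA]
        linarith only [hGuw, hmin_u, hinner_g, hBA2, hc2, hW3, hCbid,
          mul_nonneg hK.le hsq]
      have hupper : Gfun f r lam v w - Gfun f r lam u p - ⟪g, v - u⟫ ≤ Cb * ‖v - u‖^2 := by
        rw [hCbdef]
        have hsq : 0 ≤ ‖v - u‖^2 := by positivity
        linarith only [hub, mul_nonneg hdiv4.le hsq]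
      rw [abs_le]
      exact ⟨hlb, hupper⟩
    rw [hasGradientAt_iff_isLittleO, Asymptotics.isLittleO_iff]
    intro ε hε
    have hpos : 0 < ε / Cb := div_pos hε hCb
    filter_upwards [Metric.ball_mem_nhds u hpos] with v hv
    rw [Metric.mem_ball, dist_eq_norm] at hv
    have hq := hquad v
    rw [henv v, henv u, hval, Real.norm_eq_abs]
    have hs0 : 0 ≤ ‖v - u‖ := norm_nonneg _
    have h1 : Cb * ‖v - u‖ ≤ ε := by
      have h2 := mul_le_mul_of_nonneg_left hv.le hCb.le
      rw [mul_div_cancel₀ _ (ne_of_gt hCb)] at h2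
      exact h2
    calc |Gfun f r lam v (P v) - Gfun f r lam u p - ⟪g, v - u⟫| ≤ Cb * ‖v - u‖^2 := hq
      _ = (Cb * ‖v - u‖) * ‖v - u‖ := by ring
      _ ≤ ε * ‖v - u‖ := mul_le_mul_of_nonneg_right h1 hs0
      _ = ε * ‖(fun v => v - u) v‖ := rfl

end Main

theorem stmt_19 (n : ℕ) (hn : 1 ≤ n) (ρ lam : ℝ)
    (hρ : 0 < ρ) (hlam₁ : 0 < lam) (hlam₂ : lam < 1 / ρ)
    (f : EuclideanSpace ℝ (Fin n) → ℝ)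
    (hweak : WeaklyConvex ρ f)
    (hflip : ∃ L : ℝ, 0 ≤ L ∧ ∀ x y : EuclideanSpace ℝ (Fin n), |f x - f y| ≤ L * ‖x - y‖)
    (r : EuclideanSpace ℝ (Fin n) → EReal)
    (hrbot : ∀ x, r x ≠ ⊥) (hrproper : ∃ x, r x ≠ ⊤)
    (hrconv : ERealConvexOn r) (hrlsc : LowerSemicontinuous r) :
    -- (i) for every u, the proximal objective x ↦ φ(x) + (1/(2λ))‖x − u‖² has a unique minimizer
    (∀ u : EuclideanSpace ℝ (Fin n),
      ∃! p : EuclideanSpace ℝ (Fin n),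
        ∀ y : EuclideanSpace ℝ (Fin n),
          ((f p : ℝ) : EReal) + r p + ((1 / (2 * lam) * ‖p - u‖ ^ 2 : ℝ) : EReal) ≤
            ((f y : ℝ) : EReal) + r y + ((1 / (2 * lam) * ‖y - u‖ ^ 2 : ℝ) : EReal)) ∧
    -- (ii) the Moreau envelope φ^λ is finite everywhere ...
    (∀ u : EuclideanSpace ℝ (Fin n),
      moreauEnv (fun x => ((f x : ℝ) : EReal) + r x) lam u ≠ ⊥ ∧
      moreauEnv (fun x => ((f x : ℝ) : EReal) + r x) lam u ≠ ⊤) ∧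
    -- ... and differentiable at every u, with gradient λ⁻¹(u − prox_{λφ}(u))
    (∀ u p : EuclideanSpace ℝ (Fin n),
      (∀ y : EuclideanSpace ℝ (Fin n),
        ((f p : ℝ) : EReal) + r p + ((1 / (2 * lam) * ‖p - u‖ ^ 2 : ℝ) : EReal) ≤
          ((f y : ℝ) : EReal) + r y + ((1 / (2 * lam) * ‖y - u‖ ^ 2 : ℝ) : EReal)) →
      HasGradientAt (fun v => (moreauEnv (fun x => ((f x : ℝ) : EReal) + r x) lam v).toReal)
        (lam⁻¹ • (u - p)) u) := by
  obtain ⟨L, hL, hlip⟩ := hflip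
  exact moreau_main ρ lam hρ hlam₁ hlam₂ f hweak L hL hlip r hrbot hrproper hrconv hrlsc
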